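/- For the interpolated Grover Hamiltonian H(λ) = (1−λ)(I − |s⟩⟨s|) + λ(I − |w⟩⟨w|), the spectral gap between its two lowest eigenvalues (restricted to the span of |s⟩ and |w⟩) is g(λ) = √(1 − 4·((N−1)/N)·λ(1−λ)). -/

import Mathlib

/-!
With `a = ⟨s|w⟩ = 1/√N`, `H(λ)` maps `|s⟩ ↦ λ|s⟩ - λa|w⟩` and `|w⟩ ↦ -(1-λ)a|s⟩ + (1-λ)|w⟩`,
so on `span {|s⟩, |w⟩}` it acts by a `2 × 2` matrix `M` of trace `1` and determinant
`λ(1-λ)(1-a²) = λ(1-λ)(N-1)/N`. Its eigenvalues are therefore `(1 ± g)/2`, and a kernel vector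
of `M - μ` yields an eigenvector of `H(λ)`, nonzero because `|s⟩` and `|w⟩` are linearly
independent once `N ≥ 2`.
-/

open Matrix

def basisVec {N : ℕ} (w : Fin N) : Fin N → ℂ := fun i => if i = w then 1 else 0

noncomputable def unif (N : ℕ) : Fin N → ℂ := fun _ => ((1 / Real.sqrt N : ℝ) : ℂ)

/-- The interpolated Grover Hamiltonian
`H(λ) = (1-λ)(I - |s⟩⟨s|) + λ(I - |w⟩⟨w|)`. -/
noncomputable def groverHam (N : ℕ) (w : Fin N) (lam : ℝ) : Matrix (Fin N) (Fin N) ℂ :=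
  ((1 - lam : ℝ) : ℂ) • (1 - Matrix.vecMulVec (unif N) (unif N)) +
    ((lam : ℝ) : ℂ) • (1 - Matrix.vecMulVec (basisVec w) (basisVec w))

section InvariantPair

variable {K V : Type*} [Field K] [AddCommGroup V] [Module K V]

theorem exists_eigenvector_mem_span_pair (f : V →ₗ[K] V) {x y : V}
    (hxy : LinearIndependent K ![x, y]) (M : Matrix (Fin 2) (Fin 2) K)
    (hx : f x = M 0 0 • x + M 1 0 • y) (hy : f y = M 0 1 • x + M 1 1 • y)
    {μ : K} (hμ : (M - μ • 1).det = 0) :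
    ∃ v ∈ Submodule.span K {x, y}, v ≠ 0 ∧ f v = μ • v := by
  obtain ⟨c, hc_ne, hc⟩ := Matrix.exists_mulVec_eq_zero_iff.mpr hμ
  have h0 : (M 0 0 - μ) * c 0 + M 0 1 * c 1 = 0 := by
    simpa [mulVec, dotProduct, Fin.sum_univ_two] using congrFun hc 0
  have h1 : M 1 0 * c 0 + (M 1 1 - μ) * c 1 = 0 := by
    simpa [mulVec, dotProduct, Fin.sum_univ_two] using congrFun hc 1
  refine ⟨c 0 • x + c 1 • y, ?_, ?_, ?_⟩
  · exact add_mem (Submodule.smul_mem _ _ (Submodule.subset_span (by simp)))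
      (Submodule.smul_mem _ _ (Submodule.subset_span (by simp)))
  · intro hv
    obtain ⟨hc0, hc1⟩ := LinearIndependent.pair_iff.mp hxy _ _ hv
    exact hc_ne (funext fun i => by fin_cases i <;> assumption)
  · rw [map_add, map_smul, map_smul, hx, hy]
    linear_combination (norm := module) h0 • x + h1 • y

end InvariantPair

section Grover

variable {N : ℕ}

theorem basisVec_dotProduct_basisVec (w : Fin N) : basisVec w ⬝ᵥ basisVec w = 1 := by
  simp [basisVec, dotProduct]

theorem unif_dotProduct_basisVec (w : Fin N) :
    unif N ⬝ᵥ basisVec w = ((1 / Real.sqrt N : ℝ) : ℂ) := by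
  simp [unif, basisVec, dotProduct]

theorem basisVec_dotProduct_unif (w : Fin N) :
    basisVec w ⬝ᵥ unif N = ((1 / Real.sqrt N : ℝ) : ℂ) := by
  simp [unif, basisVec, dotProduct]

theorem unif_dotProduct_unif (hN : N ≠ 0) : unif N ⬝ᵥ unif N = 1 := by
  have hN' : (0 : ℝ) < N := by positivity
  simp only [unif, dotProduct, Finset.sum_const, Finset.card_univ, Fintype.card_fin, nsmul_eq_mul]
  have h : (N : ℝ) * (1 / Real.sqrt N * (1 / Real.sqrt N)) = 1 := by
    rw [one_div_mul_one_div, Real.mul_self_sqrt hN'.le, mul_one_div_cancel hN'.ne']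
  exact_mod_cast h

theorem groverHam_mulVec (w : Fin N) (lam : ℝ) (v : Fin N → ℂ) :
    groverHam N w lam *ᵥ v =
      v - ((1 - lam : ℝ) : ℂ) • (unif N ⬝ᵥ v) • unif N
        - (lam : ℂ) • (basisVec w ⬝ᵥ v) • basisVec w := by
  simp only [groverHam, add_mulVec, smul_mulVec, sub_mulVec, one_mulVec, vecMulVec_mulVec,
    op_smul_eq_smul]
  push_cast
  module

theorem groverHam_mulVec_unif (hN : N ≠ 0) (w : Fin N) (lam : ℝ) :
    groverHam N w lam *ᵥ unif N =
      (lam : ℂ) • unif N + (-(lam / Real.sqrt N : ℝ) : ℂ) • basisVec w := by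
  rw [groverHam_mulVec, unif_dotProduct_unif hN, basisVec_dotProduct_unif]
  push_cast
  module

theorem groverHam_mulVec_basisVec (w : Fin N) (lam : ℝ) :
    groverHam N w lam *ᵥ basisVec w =
      (-((1 - lam) / Real.sqrt N : ℝ) : ℂ) • unif N
        + ((1 - lam : ℝ) : ℂ) • basisVec w := by
  rw [groverHam_mulVec, unif_dotProduct_basisVec, basisVec_dotProduct_basisVec]
  push_cast
  module

theorem linearIndependent_unif_basisVec (hN : 2 ≤ N) (w : Fin N) :
    LinearIndependent ℂ ![unif N, basisVec w] := by
  have : Nontrivial (Fin N) := Fin.nontrivial_iff_two_le.mpr hN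
  obtain ⟨i, hi⟩ := exists_ne w
  have ha : ((1 / Real.sqrt N : ℝ) : ℂ) ≠ 0 := by
    have : (0 : ℝ) < N := by positivity
    exact_mod_cast (by positivity : (1 / Real.sqrt N : ℝ) ≠ 0)
  refine LinearIndependent.pair_iff.mpr fun s t hst => ?_
  have hs : s = 0 := by
    have hsi := congrFun hst i
    simp only [Pi.add_apply, Pi.smul_apply, unif, basisVec, if_neg hi, smul_eq_mul, mul_zero,
      add_zero, Pi.zero_apply] at hsi
    exact (mul_eq_zero.mp hsi).resolve_right ha
  have ht : t = 0 := by
    simpa [unif, basisVec, hs] using congrFun hst w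
  exact ⟨hs, ht⟩

noncomputable def groverReducedMatrix (N : ℕ) (lam : ℝ) : Matrix (Fin 2) (Fin 2) ℂ :=
  !![(lam : ℂ), (-((1 - lam) / Real.sqrt N : ℝ) : ℂ);
    (-(lam / Real.sqrt N : ℝ) : ℂ), ((1 - lam : ℝ) : ℂ)]

theorem det_groverReducedMatrix_sub (hN : N ≠ 0) (lam μ : ℝ) :
    (groverReducedMatrix N lam - (μ : ℂ) • 1).det =
      ((μ ^ 2 - μ + lam * (1 - lam) * ((N - 1 : ℝ) / N) : ℝ) : ℂ) := by
  have hN' : (0 : ℝ) < N := by positivity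
  have h : (lam - μ) * (1 - lam - μ) - (1 - lam) / Real.sqrt N * (lam / Real.sqrt N) =
      μ ^ 2 - μ + lam * (1 - lam) * ((N - 1 : ℝ) / N) := by
    field_simp
    rw [Real.sq_sqrt hN'.le]
    ring
  rw [det_fin_two]
  simpa [groverReducedMatrix] using congrArg Complex.ofReal h

theorem grover_discriminant_nonneg (hN : N ≠ 0) (lam : ℝ) :
    0 ≤ 1 - 4 * ((N - 1 : ℝ) / N) * lam * (1 - lam) := by
  have hN' : (1 : ℝ) ≤ N := by exact_mod_cast Nat.one_le_iff_ne_zero.mpr hN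
  have h : 1 - 4 * ((N - 1 : ℝ) / N) * lam * (1 - lam) =
      1 / N + (N - 1) / N * (1 - 2 * lam) ^ 2 := by
    field_simp
    ring
  rw [h]
  have : 0 ≤ (N - 1 : ℝ) / N := div_nonneg (by linarith) (by linarith)
  positivity

end Grover

theorem grover_spectral_gap_general (N : ℕ) (hN : 2 ≤ N) (w : Fin N) (lam : ℝ) :
    ∃ μ₁ μ₂ : ℝ, μ₁ ≤ μ₂ ∧
      (∃ u ∈ Submodule.span ℂ ({unif N, basisVec w} : Set (Fin N → ℂ)), u ≠ 0 ∧
        (groverHam N w lam).mulVec u = ((μ₁ : ℝ) : ℂ) • u) ∧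
      (∃ v ∈ Submodule.span ℂ ({unif N, basisVec w} : Set (Fin N → ℂ)), v ≠ 0 ∧
        (groverHam N w lam).mulVec v = ((μ₂ : ℝ) : ℂ) • v) ∧
      μ₂ - μ₁ = Real.sqrt (1 - 4 * ((N - 1 : ℝ) / N) * lam * (1 - lam)) := by
  have hN0 : N ≠ 0 := by omega
  set g := Real.sqrt (1 - 4 * ((N - 1 : ℝ) / N) * lam * (1 - lam))
  have hg : g ^ 2 = 1 - 4 * ((N - 1 : ℝ) / N) * lam * (1 - lam) :=
    Real.sq_sqrt (grover_discriminant_nonneg hN0 lam)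
  have eigenvector (μ : ℝ) (hμ : μ ^ 2 - μ + lam * (1 - lam) * ((N - 1 : ℝ) / N) = 0) :
      ∃ v ∈ Submodule.span ℂ ({unif N, basisVec w} : Set (Fin N → ℂ)), v ≠ 0 ∧
        (groverHam N w lam).mulVec v = ((μ : ℝ) : ℂ) • v :=
    exists_eigenvector_mem_span_pair (Matrix.toLin' (groverHam N w lam))
      (linearIndependent_unif_basisVec hN w) (groverReducedMatrix N lam)
      (groverHam_mulVec_unif hN0 w lam) (groverHam_mulVec_basisVec w lam)
      (by rw [det_groverReducedMatrix_sub hN0, hμ, Complex.ofReal_zero])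
  have hg0 : 0 ≤ g := Real.sqrt_nonneg _
  refine ⟨(1 - g) / 2, (1 + g) / 2, by linarith, eigenvector _ ?_, eigenvector _ ?_, by ring⟩
  · linear_combination hg / 4
  · linear_combination hg / 4

/-- On the two-dimensional invariant subspace spanned by `|s⟩` and `|w⟩`,
the two eigenvalues of `H(λ)` differ by
`g(λ) = √(1 - 4((N-1)/N)λ(1-λ))`. -/
theorem grover_spectral_gap (N : ℕ) (hN : 2 ≤ N) (w : Fin N) (lam : ℝ)
    (hl : lam ∈ Set.Icc (0 : ℝ) 1) :
    ∃ μ₁ μ₂ : ℝ, μ₁ ≤ μ₂ ∧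
      (∃ u ∈ Submodule.span ℂ ({unif N, basisVec w} : Set (Fin N → ℂ)), u ≠ 0 ∧
        (groverHam N w lam).mulVec u = ((μ₁ : ℝ) : ℂ) • u) ∧
      (∃ v ∈ Submodule.span ℂ ({unif N, basisVec w} : Set (Fin N → ℂ)), v ≠ 0 ∧
        (groverHam N w lam).mulVec v = ((μ₂ : ℝ) : ℂ) • v) ∧
      μ₂ - μ₁ = Real.sqrt (1 - 4 * ((N - 1 : ℝ) / N) * lam * (1 - lam)) :=
  grover_spectral_gap_general N hN w lam
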